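/- Let A be a commutative ring. The assignment ε(a) ↦ (class of w₂₁(−1)x₂₁(a)) induces a well-defined group isomorphism γ: C(A) → St(2,A)/C(2,A), and γ restricts to an isomorphism from U(A) := ker(ψ: C(A) → SL₂(A)) onto K₂(2,A)/C(2,A). In particular U(A) ≅ K₂(2,A)/C(2,A). -/

import Mathlib

open Matrix

/-- The word `h(u) = ε(-u)ε(-u⁻¹)ε(-u)` in the free group on the symbols `ε(a)`, `a ∈ A`. -/
def hFree {A : Type*} [CommRing A] (u : Aˣ) : FreeGroup A :=
  FreeGroup.of (-(u : A)) * FreeGroup.of (-((u⁻¹ : Aˣ) : A)) * FreeGroup.of (-(u : A))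

/-- The defining relations of Cohn's group C(A). -/
def CRels (A : Type*) [CommRing A] : Set (FreeGroup A) :=
  {x | ∃ u v : Aˣ, x = hFree u * hFree v * (hFree (u * v))⁻¹} ∪
  {x | ∃ a b : A, x = FreeGroup.of a * FreeGroup.of (0 : A) * FreeGroup.of b *
      (hFree (-1) * FreeGroup.of (a + b))⁻¹} ∪
  {x | ∃ (u : Aˣ) (a : A), x = hFree u * FreeGroup.of a * hFree u *
      (FreeGroup.of ((u : A) ^ 2 * a))⁻¹}

/-- Cohn's group C(A), presented by generators ε(a), a ∈ A, and the three families of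
relations h(u)h(v) = h(uv), ε(a)ε(0)ε(b) = h(-1)ε(a+b), h(u)ε(a)h(u) = ε(u²a). -/
abbrev CGroup (A : Type*) [CommRing A] := PresentedGroup (CRels A)

/-- The generator ε(a) of C(A). -/
def epsC {A : Type*} [CommRing A] (a : A) : CGroup A := PresentedGroup.of a

/-- h(u) = ε(-u)ε(-u⁻¹)ε(-u) in C(A). -/
def hC {A : Type*} [CommRing A] (u : Aˣ) : CGroup A :=
  epsC (-(u : A)) * epsC (-((u⁻¹ : Aˣ) : A)) * epsC (-(u : A))

/-- y(a) = ε(0)³ε(a) in C(A). -/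
def yC {A : Type*} [CommRing A] (a : A) : CGroup A := (epsC (0 : A)) ^ 3 * epsC a

/-- ȳ(a) = ε(-a)ε(0)³ in C(A). -/
def ybarC {A : Type*} [CommRing A] (a : A) : CGroup A := epsC (-a) * (epsC (0 : A)) ^ 3

/-- β(u,a) = h(u)y(ua) in C(A). -/
def betaC {A : Type*} [CommRing A] (u : Aˣ) (a : A) : CGroup A := hC u * yC ((u : A) * a)

/-- E(a) = [[a,1],[-1,0]] as an element of SL₂. -/
def ESL {A : Type*} [CommRing A] (a : A) : Matrix.SpecialLinearGroup (Fin 2) A :=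
  ⟨!![a, 1; -1, 0], by simp [Matrix.det_fin_two_of]⟩

/-- D(u) = diag(u, u⁻¹) as an element of SL₂. -/
def DSL {A : Type*} [CommRing A] (u : Aˣ) : Matrix.SpecialLinearGroup (Fin 2) A :=
  ⟨!![(u : A), 0; 0, ((u⁻¹ : Aˣ) : A)], by simp [Matrix.det_fin_two_of]⟩

theorem ESL_h {A : Type*} [CommRing A] (u : Aˣ) :
    ESL (-(u : A)) * ESL (-((u⁻¹ : Aˣ) : A)) * ESL (-(u : A)) = DSL u := by
  apply Subtype.ext
  show (!![-(u:A), 1; -1, 0] * !![-((u⁻¹:Aˣ):A), 1; -1, 0]) * !![-(u:A), 1; -1, 0] = _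
  ext i j
  fin_cases i <;> fin_cases j <;>
    simp [DSL, Matrix.mul_apply, Fin.sum_univ_two]

theorem DSL_mul {A : Type*} [CommRing A] (u v : Aˣ) : DSL u * DSL v = DSL (u * v) := by
  apply Subtype.ext
  show (!![(u:A), 0; 0, ((u⁻¹:Aˣ):A)] * !![(v:A), 0; 0, ((v⁻¹:Aˣ):A)]) = _
  ext i j
  fin_cases i <;> fin_cases j <;>
    simp [DSL, Matrix.mul_apply, Fin.sum_univ_two, mul_comm]

theorem ESL_rel2 {A : Type*} [CommRing A] (a b : A) :
    ESL a * ESL (0 : A) * ESL b = DSL (-1) * ESL (a + b) := by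
  apply Subtype.ext
  show (!![a, 1; -1, 0] * !![(0:A), 1; -1, 0]) * !![b, 1; -1, 0] = (DSL (-1 : Aˣ)).1 * (ESL (a + b)).1
  ext i j
  fin_cases i <;> fin_cases j <;>
    simp [DSL, ESL, Matrix.mul_apply, Fin.sum_univ_two]

theorem ESL_rel3 {A : Type*} [CommRing A] (u : Aˣ) (a : A) :
    DSL u * ESL a * DSL u = ESL ((u : A) ^ 2 * a) := by
  apply Subtype.ext
  show (!![(u:A), 0; 0, ((u⁻¹:Aˣ):A)] * !![a, 1; -1, 0]) * !![(u:A), 0; 0, ((u⁻¹:Aˣ):A)] = _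
  ext i j
  fin_cases i <;> fin_cases j <;>
    simp [ESL, Matrix.mul_apply, Fin.sum_univ_two] <;> ring

theorem lift_hFree {A : Type*} [CommRing A] (u : Aˣ) :
    FreeGroup.lift (fun a : A => ESL a) (hFree u) = DSL u := by
  simp only [hFree, _root_.map_mul, FreeGroup.lift_apply_of]
  exact ESL_h u

theorem CRels_liftable {A : Type*} [CommRing A] :
    ∀ r ∈ CRels A, FreeGroup.lift (fun a : A => ESL a) r = 1 := by
  rintro r ((⟨u, v, rfl⟩ | ⟨a, b, rfl⟩) | ⟨u, a, rfl⟩)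
  · rw [_root_.map_mul, _root_.map_mul, map_inv, lift_hFree, lift_hFree, lift_hFree, DSL_mul,
      mul_inv_cancel]
  · simp only [_root_.map_mul, map_inv, FreeGroup.lift_apply_of, lift_hFree]
    rw [ESL_rel2, mul_inv_cancel]
  · simp only [_root_.map_mul, map_inv, FreeGroup.lift_apply_of, lift_hFree]
    rw [ESL_rel3, mul_inv_cancel]

/-- The homomorphism ψ : C(A) → SL₂(A) with ψ(ε(a)) = E(a). -/
def psiC (A : Type*) [CommRing A] : CGroup A →* Matrix.SpecialLinearGroup (Fin 2) A :=
  PresentedGroup.toGroup CRels_liftable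

@[simp] theorem psiC_epsC {A : Type*} [CommRing A] (a : A) : psiC A (epsC a) = ESL a :=
  PresentedGroup.toGroup.of _
open Matrix

/-- The generator x₁₂(t) (for `b = true`) or x₂₁(t) (for `b = false`) in the free group. -/
def xF {A : Type*} (b : Bool) (t : A) : FreeGroup (Bool × A) := FreeGroup.of (b, t)

/-- The word w_ij(u) = x_ij(u) x_ji(-u⁻¹) x_ij(u). -/
def wFSt {A : Type*} [CommRing A] (b : Bool) (u : Aˣ) : FreeGroup (Bool × A) :=
  xF b (u : A) * xF (!b) (-((u⁻¹ : Aˣ) : A)) * xF b (u : A)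

/-- The defining relations of the rank-one Steinberg group St(2,A). -/
def StRels (A : Type*) [CommRing A] : Set (FreeGroup (Bool × A)) :=
  {x | ∃ (b : Bool) (s t : A), x = xF b s * xF b t * (xF b (s + t))⁻¹} ∪
  {x | ∃ (b : Bool) (u : Aˣ) (t : A),
    x = wFSt b u * xF b t * wFSt b (-u) * (xF (!b) (-(((u⁻¹ : Aˣ) : A) ^ 2 * t)))⁻¹}

/-- The rank-one Steinberg group St(2,A). -/
abbrev St2 (A : Type*) [CommRing A] := PresentedGroup (StRels A)

/-- The generators of St(2,A): `xSt true t = x₁₂(t)`, `xSt false t = x₂₁(t)`. -/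
def xSt {A : Type*} [CommRing A] (b : Bool) (t : A) : St2 A := PresentedGroup.of (b, t)

/-- w_ij(u) in St(2,A). -/
def wSt {A : Type*} [CommRing A] (b : Bool) (u : Aˣ) : St2 A :=
  xSt b (u : A) * xSt (!b) (-((u⁻¹ : Aˣ) : A)) * xSt b (u : A)

/-- h_ij(u) = w_ij(u)w_ij(-1) in St(2,A). -/
def hSt {A : Type*} [CommRing A] (b : Bool) (u : Aˣ) : St2 A := wSt b u * wSt b (-1)

/-- The symbol c(u,v) = h₁₂(u)h₁₂(v)h₁₂(uv)⁻¹ in St(2,A). -/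
def symbolSt {A : Type*} [CommRing A] (u v : Aˣ) : St2 A :=
  hSt true u * hSt true v * (hSt true (u * v))⁻¹

/-- C(2,A): the subgroup of St(2,A) generated by the symbols c(u,v).  (Since the symbols
are central in St(2,A), this agrees with the normal closure of the set of symbols, which we
use here so that the quotient is a group.) -/
def C2 (A : Type*) [CommRing A] : Subgroup (St2 A) :=
  Subgroup.normalClosure {x | ∃ u v : Aˣ, x = symbolSt u v}

instance C2_normal (A : Type*) [CommRing A] : (C2 A).Normal :=
  Subgroup.normalClosure_normal

/-- The elementary matrix [[1,t],[0,1]] in SL₂. -/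
def E12SL {A : Type*} [CommRing A] (t : A) : Matrix.SpecialLinearGroup (Fin 2) A :=
  ⟨!![1, t; 0, 1], by simp [Matrix.det_fin_two_of]⟩

/-- The elementary matrix [[1,0],[t,1]] in SL₂. -/
def E21SL {A : Type*} [CommRing A] (t : A) : Matrix.SpecialLinearGroup (Fin 2) A :=
  ⟨!![1, 0; t, 1], by simp [Matrix.det_fin_two_of]⟩

/-- The image of the generators of St(2,A) in SL₂(A). -/
def stGen {A : Type*} [CommRing A] (p : Bool × A) : Matrix.SpecialLinearGroup (Fin 2) A :=
  cond p.1 (E12SL p.2) (E21SL p.2)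

def WSL {A : Type*} [CommRing A] (b : Bool) (u : Aˣ) : Matrix.SpecialLinearGroup (Fin 2) A :=
  if b then ⟨!![0, (u : A); -((u⁻¹ : Aˣ) : A), 0], by simp [Matrix.det_fin_two_of]⟩
  else ⟨!![0, -((u⁻¹ : Aˣ) : A); (u : A), 0], by simp [Matrix.det_fin_two_of]⟩

theorem stGen_w {A : Type*} [CommRing A] (b : Bool) (u : Aˣ) :
    stGen (b, (u : A)) * stGen (!b, -((u⁻¹ : Aˣ) : A)) * stGen (b, (u : A)) = WSL b u := by
  cases b <;>
  · simp only [stGen, cond_true, cond_false, Bool.not_true, Bool.not_false]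
    apply Subtype.ext
    show (_ * _) * _ = _
    ext i j
    fin_cases i <;> fin_cases j <;>
      simp [stGen, WSL, E12SL, E21SL, Matrix.mul_apply, Fin.sum_univ_two]

theorem stGen_add {A : Type*} [CommRing A] (b : Bool) (s t : A) :
    stGen (b, s) * stGen (b, t) = stGen (b, s + t) := by
  cases b <;>
  · simp only [stGen, cond_true, cond_false]
    apply Subtype.ext
    show _ * _ = _
    ext i j
    fin_cases i <;> fin_cases j <;>
      simp [stGen, E12SL, E21SL, Matrix.mul_apply, Fin.sum_univ_two, add_comm]

theorem WSL_rel {A : Type*} [CommRing A] (b : Bool) (u : Aˣ) (t : A) :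
    WSL b u * stGen (b, t) * WSL b (-u) = stGen (!b, -(((u⁻¹ : Aˣ) : A) ^ 2 * t)) := by
  cases b <;>
  · simp only [stGen, cond_true, cond_false, Bool.not_true, Bool.not_false]
    apply Subtype.ext
    show (_ * _) * _ = _
    ext i j
    fin_cases i <;> fin_cases j <;>
      simp [stGen, WSL, E12SL, E21SL, Matrix.mul_apply, Fin.sum_univ_two, inv_neg] <;>
      ring

theorem StRels_liftable {A : Type*} [CommRing A] :
    ∀ r ∈ StRels A, FreeGroup.lift (stGen (A := A)) r = 1 := by
  rintro r (⟨b, s, t, rfl⟩ | ⟨b, u, t, rfl⟩)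
  · rw [_root_.map_mul, _root_.map_mul, map_inv]
    simp only [xF, FreeGroup.lift_apply_of]
    rw [stGen_add, mul_inv_cancel]
  · rw [_root_.map_mul, _root_.map_mul, _root_.map_mul, map_inv]
    simp only [wFSt, xF, _root_.map_mul, FreeGroup.lift_apply_of]
    rw [stGen_w, stGen_w, WSL_rel, mul_inv_cancel]

/-- The homomorphism φ : St(2,A) → SL₂(A). -/
def phiSt (A : Type*) [CommRing A] : St2 A →* Matrix.SpecialLinearGroup (Fin 2) A :=
  PresentedGroup.toGroup StRels_liftable

@[simp] theorem phiSt_xSt {A : Type*} [CommRing A] (b : Bool) (t : A) :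
    phiSt A (xSt b t) = stGen (b, t) :=
  PresentedGroup.toGroup.of _

/-!
The inverse of γ is induced by `x₂₁(t) ↦ y(t) = ε(0)³ε(t)` and `x₁₂(t) ↦ ȳ(t) = ε(-t)ε(0)³`.
In C(A) the element `ε(0)² = h(-1)` is central of order two; this turns
`ε(a)ε(0)ε(b) = h(-1)ε(a+b)` into additivity of `y` and `ȳ`, the Steinberg relation becomes
`h(u)ε(a)h(u) = ε(u²a)`, and `h₁₂(u)` is sent to `h(u)`, so the symbols die.
Conversely, conjugation by `ω = w₂₁(-1)` exchanges `x₁₂(t)` and `x₂₁(-t)`, so `ω²` is central,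
and `ε(a) ↦ ω x₂₁(a)` sends `h(u)` to `h₁₂(u) ω⁴`, which is `h₁₂(u)` modulo C(2,A).
Both composites fix the generators. Finally `ψ` maps `y(t)` and `ȳ(t)` to the elementary
matrices, so `φ` factors through `γ⁻¹` and `ψ`, and γ carries `ker ψ` onto the image of `ker φ`.
-/

theorem PresentedGroup.commute_of_forall_commute_of {α : Type*} {rels : Set (FreeGroup α)}
    {g : PresentedGroup rels} (h : ∀ a, Commute g (of a)) (x : PresentedGroup rels) :
    Commute g x := by
  have hx := generated_by rels (Subgroup.centralizer {g})
    (fun a => Subgroup.mem_centralizer_singleton_iff.mpr (h a).symm.eq) x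
  exact (Subgroup.mem_centralizer_singleton_iff.mp hx).symm

section StRelsFamily

variable {A G : Type*} [CommRing A] [Group G] {f : Bool × A → G}

def wOf (f : Bool × A → G) (b : Bool) (u : Aˣ) : G :=
  f (b, u) * f (!b, -((u⁻¹ : Aˣ) : A)) * f (b, u)

theorem lift_wFSt (b : Bool) (u : Aˣ) : FreeGroup.lift f (wFSt b u) = wOf f b u := by
  simp [wFSt, xF, wOf]

theorem apply_zero_of_add (hadd : ∀ b s t, f (b, s) * f (b, t) = f (b, s + t)) (b : Bool) :
    f (b, 0) = 1 :=
  mul_eq_left.mp ((hadd b 0 0).trans (by rw [add_zero]))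

theorem inv_apply_of_add (hadd : ∀ b s t, f (b, s) * f (b, t) = f (b, s + t)) (b : Bool)
    (t : A) : (f (b, t))⁻¹ = f (b, -t) :=
  inv_eq_of_mul_eq_one_right (by rw [hadd, add_neg_cancel, apply_zero_of_add hadd])

theorem wOf_neg (hadd : ∀ b s t, f (b, s) * f (b, t) = f (b, s + t)) (b : Bool) (u : Aˣ) :
    wOf f b (-u) = (wOf f b u)⁻¹ := by
  simp only [wOf, _root_.mul_inv_rev, inv_apply_of_add hadd, Units.val_neg, inv_neg, neg_neg,
    mul_assoc]

variable {b : Bool}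

theorem wOf_conj_not (hadd : ∀ b s t, f (b, s) * f (b, t) = f (b, s + t))
    (hrel : ∀ u t, wOf f b u * f (b, t) * (wOf f b u)⁻¹ = f (!b, -(((u⁻¹ : Aˣ) : A) ^ 2 * t)))
    (u : Aˣ) (t : A) : wOf f b u * f (!b, t) * (wOf f b u)⁻¹ = f (b, -((u : A) ^ 2 * t)) := by
  have hc : -((((-u)⁻¹ : Aˣ) : A) ^ 2 * -((u : A) ^ 2 * t)) = t := by
    rw [inv_neg, Units.val_neg, neg_sq, mul_neg, neg_neg, ← mul_assoc, ← mul_pow, Units.inv_mul,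
      one_pow, one_mul]
  have h := hrel (-u) (-((u : A) ^ 2 * t))
  rw [wOf_neg hadd, inv_inv, hc] at h
  rw [← h]
  group

-- The relation for one index already forces the flip, and with it the relation for the other
-- index (`wOf_conj_of_not`), so only half of the Steinberg relations need to be checked.
theorem wOf_flip (hadd : ∀ b s t, f (b, s) * f (b, t) = f (b, s + t))
    (hrel : ∀ u t, wOf f b u * f (b, t) * (wOf f b u)⁻¹ = f (!b, -(((u⁻¹ : Aˣ) : A) ^ 2 * t)))
    (u : Aˣ) : wOf f b u = wOf f (!b) (-u⁻¹) := by
  have hc : -(((u⁻¹ : Aˣ) : A) ^ 2 * -(u : A)) = ((u⁻¹ : Aˣ) : A) := by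
    rw [mul_neg, neg_neg, sq, mul_assoc, Units.inv_mul, mul_one]
  have hw : wOf f b u * f (b, -u) = f (b, u) * f (!b, -((u⁻¹ : Aˣ) : A)) := by
    rw [wOf, mul_assoc _ (f (b, u)), hadd, add_neg_cancel, apply_zero_of_add hadd, mul_one]
  have h := hrel u (-u)
  rw [hc, hw] at h
  calc wOf f b u = (f (!b, ((u⁻¹ : Aˣ) : A)))⁻¹ * (f (b, u) * f (!b, -((u⁻¹ : Aˣ) : A))) := by
        rw [← h]; group
    _ = wOf f (!b) (-u⁻¹) := by
        simp only [wOf, inv_apply_of_add hadd, Bool.not_not, Units.val_neg, inv_neg, inv_inv,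
          neg_neg, mul_assoc]

theorem wOf_not (hadd : ∀ b s t, f (b, s) * f (b, t) = f (b, s + t))
    (hrel : ∀ u t, wOf f b u * f (b, t) * (wOf f b u)⁻¹ = f (!b, -(((u⁻¹ : Aˣ) : A) ^ 2 * t)))
    (u : Aˣ) : wOf f (!b) u = wOf f b (-u⁻¹) := by
  rw [wOf_flip hadd hrel (-u⁻¹), inv_neg, inv_inv, neg_neg]

theorem wOf_conj_of_not (hadd : ∀ b s t, f (b, s) * f (b, t) = f (b, s + t))
    (hrel : ∀ u t, wOf f b u * f (b, t) * (wOf f b u)⁻¹ = f (!b, -(((u⁻¹ : Aˣ) : A) ^ 2 * t)))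
    (u : Aˣ) (t : A) :
    wOf f (!b) u * f (!b, t) * (wOf f (!b) u)⁻¹ = f (b, -(((u⁻¹ : Aˣ) : A) ^ 2 * t)) := by
  have h := wOf_conj_not hadd hrel (-u⁻¹) t
  rwa [← wOf_not hadd hrel, Units.val_neg, neg_sq] at h

theorem lift_eq_one_of_mem_StRels (hadd : ∀ b s t, f (b, s) * f (b, t) = f (b, s + t))
    (hrel : ∀ u t, wOf f false u * f (false, t) * (wOf f false u)⁻¹ =
      f (true, -(((u⁻¹ : Aˣ) : A) ^ 2 * t))) :
    ∀ r ∈ StRels A, FreeGroup.lift f r = 1 := by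
  rintro r (⟨b, s, t, rfl⟩ | ⟨b, u, t, rfl⟩)
  · simp [xF, hadd]
  · rw [_root_.map_mul, map_inv, mul_inv_eq_one, _root_.map_mul, _root_.map_mul, lift_wFSt,
      lift_wFSt, wOf_neg hadd, xF, xF, FreeGroup.lift_apply_of, FreeGroup.lift_apply_of]
    cases b
    · exact hrel u t
    · exact wOf_conj_of_not hadd hrel u t

end StRelsFamily

section CohnGroup

variable {A : Type*} [CommRing A]

theorem epsC_eq_mk (a : A) : epsC a = PresentedGroup.mk (CRels A) (FreeGroup.of a) := rfl

theorem hC_eq_mk (u : Aˣ) : hC u = PresentedGroup.mk (CRels A) (hFree u) := by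
  simp only [hC, hFree, epsC_eq_mk, _root_.map_mul]

theorem hC_mul (u v : Aˣ) : hC u * hC v = hC (u * v) := by
  simpa only [hC_eq_mk, epsC_eq_mk, _root_.map_mul] using
    PresentedGroup.mk_eq_mk_of_mul_inv_mem (rels := CRels A) (Or.inl (Or.inl ⟨u, v, rfl⟩))

theorem epsC_mul_epsC_zero_mul_epsC (a b : A) :
    epsC a * epsC 0 * epsC b = hC (-1) * epsC (a + b) := by
  simpa only [hC_eq_mk, epsC_eq_mk, _root_.map_mul] using
    PresentedGroup.mk_eq_mk_of_mul_inv_mem (rels := CRels A) (Or.inl (Or.inr ⟨a, b, rfl⟩))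

theorem hC_mul_epsC_mul_hC (u : Aˣ) (a : A) : hC u * epsC a * hC u = epsC ((u : A) ^ 2 * a) := by
  simpa only [hC_eq_mk, epsC_eq_mk, _root_.map_mul] using
    PresentedGroup.mk_eq_mk_of_mul_inv_mem (rels := CRels A) (Or.inr ⟨u, a, rfl⟩)

theorem hC_one : hC (1 : Aˣ) = 1 :=
  mul_eq_left.mp ((hC_mul 1 1).trans (by rw [mul_one]))

theorem hC_inv (u : Aˣ) : hC u⁻¹ = (hC u)⁻¹ :=
  eq_inv_of_mul_eq_one_left (by rw [hC_mul, inv_mul_cancel, hC_one])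

theorem hC_neg_one : hC (-1 : Aˣ) = epsC 0 ^ 2 := by
  have h := epsC_mul_epsC_zero_mul_epsC (0 : A) 0
  rw [add_zero] at h
  rw [sq, mul_right_cancel h]

theorem epsC_zero_pow_four : (epsC 0 : CGroup A) ^ 4 = 1 := by
  rw [show 4 = 2 * 2 from rfl, pow_mul, ← hC_neg_one, sq, hC_mul, neg_mul_neg, mul_one, hC_one]

theorem epsC_zero_pow_three : (epsC 0 : CGroup A) ^ 3 = (epsC 0)⁻¹ :=
  eq_inv_of_mul_eq_one_left (by rw [← pow_succ, epsC_zero_pow_four])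

theorem epsC_zero_sq_inv : (epsC 0 ^ 2 : CGroup A)⁻¹ = epsC 0 ^ 2 :=
  inv_eq_of_mul_eq_one_right (by rw [← pow_add, epsC_zero_pow_four])

theorem commute_epsC_zero_sq (g : CGroup A) : Commute (epsC 0 ^ 2) g := by
  refine PresentedGroup.commute_of_forall_commute_of (fun a => ?_) g
  have h := hC_mul_epsC_mul_hC (-1) a
  rw [Units.val_neg, Units.val_one, neg_one_sq, one_mul, hC_neg_one, ← eq_mul_inv_iff_mul_eq] at h
  rwa [epsC_zero_sq_inv] at h

theorem epsC_mul_epsC_zero_inv_mul_epsC (a b : A) :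
    epsC a * (epsC 0)⁻¹ * epsC b = epsC (a + b) := by
  calc epsC a * (epsC 0)⁻¹ * epsC b = epsC a * epsC 0 * (epsC 0 ^ 2 * epsC b) := by
        rw [← epsC_zero_pow_three, pow_succ']; group
    _ = epsC 0 ^ 2 * epsC (a + b) * epsC 0 ^ 2 := by
        rw [(commute_epsC_zero_sq _).eq, ← mul_assoc, epsC_mul_epsC_zero_mul_epsC, hC_neg_one]
    _ = epsC (a + b) := by
        rw [(commute_epsC_zero_sq _).eq, mul_assoc, ← pow_add, epsC_zero_pow_four, mul_one]

theorem epsC_zero_conj_hC (u : Aˣ) : epsC 0 * hC u * (epsC 0)⁻¹ = hC u⁻¹ := by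
  have h := hC_mul_epsC_mul_hC u⁻¹ 0
  rw [mul_zero, hC_inv] at h
  rw [hC_inv]
  nth_rw 1 [← h]
  group

theorem yC_mul_yC (s t : A) : yC s * yC t = yC (s + t) := by
  simp only [yC, epsC_zero_pow_three]
  rw [← epsC_mul_epsC_zero_inv_mul_epsC]
  group

theorem ybarC_mul_ybarC (s t : A) : ybarC s * ybarC t = ybarC (s + t) := by
  simp only [ybarC, epsC_zero_pow_three]
  rw [neg_add, ← epsC_mul_epsC_zero_inv_mul_epsC]
  group

def stGenToCohn : Bool × A → CGroup A := fun p => cond p.1 (ybarC p.2) (yC p.2)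

theorem stGenToCohn_add (b : Bool) (s t : A) :
    stGenToCohn (b, s) * stGenToCohn (b, t) = stGenToCohn (b, s + t) := by
  cases b
  · exact yC_mul_yC s t
  · exact ybarC_mul_ybarC s t

theorem wOf_stGenToCohn_false (u : Aˣ) : wOf stGenToCohn false u = epsC 0 * hC (-u) := by
  have hh : hC (-u) = epsC (u : A) * epsC ((u⁻¹ : Aˣ) : A) * epsC (u : A) := by
    simp only [hC, Units.val_neg, inv_neg, neg_neg]
  calc wOf stGenToCohn false u
      = (epsC 0)⁻¹ * (epsC (u : A) * epsC ((u⁻¹ : Aˣ) : A) * ((epsC 0)⁻¹ * (epsC 0)⁻¹) *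
          epsC (u : A)) := by
        simp only [wOf, stGenToCohn, yC, ybarC, cond_false, cond_true, Bool.not_false, neg_neg,
          epsC_zero_pow_three]
        group
    _ = epsC 0 * hC (-u) := by
        rw [← _root_.mul_inv_rev, ← sq, epsC_zero_sq_inv, ← (commute_epsC_zero_sq _).eq, hh]
        group

theorem wOf_stGenToCohn_conj (u : Aˣ) (t : A) :
    wOf stGenToCohn false u * stGenToCohn (false, t) * (wOf stGenToCohn false u)⁻¹ =
      stGenToCohn (true, -(((u⁻¹ : Aˣ) : A) ^ 2 * t)) := by
  simp only [wOf_stGenToCohn_false, stGenToCohn, cond_false, cond_true, yC, ybarC, neg_neg,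
    epsC_zero_pow_three]
  calc epsC 0 * hC (-u) * ((epsC 0)⁻¹ * epsC t) * (epsC 0 * hC (-u))⁻¹
      = epsC 0 * hC (-u) * (epsC 0)⁻¹ * epsC t * (hC (-u))⁻¹ * (epsC 0)⁻¹ := by group
    _ = epsC (((u⁻¹ : Aˣ) : A) ^ 2 * t) * (epsC 0)⁻¹ := by
        rw [epsC_zero_conj_hC, ← hC_inv, hC_mul_epsC_mul_hC, inv_neg, Units.val_neg, neg_sq]

def stToCohn : St2 A →* CGroup A :=
  PresentedGroup.toGroup (lift_eq_one_of_mem_StRels stGenToCohn_add wOf_stGenToCohn_conj)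

theorem stToCohn_xSt (b : Bool) (t : A) : stToCohn (xSt b t) = stGenToCohn (b, t) :=
  PresentedGroup.toGroup.of _

theorem stToCohn_wSt (b : Bool) (u : Aˣ) : stToCohn (wSt b u) = wOf stGenToCohn b u := by
  simp only [wSt, wOf, _root_.map_mul, stToCohn_xSt]

theorem stToCohn_hSt (u : Aˣ) : stToCohn (hSt true u) = hC u := by
  have hw (v : Aˣ) : wOf stGenToCohn true v = epsC 0 * hC v⁻¹ :=
    (wOf_not (b := false) stGenToCohn_add wOf_stGenToCohn_conj v).trans
      (by rw [wOf_stGenToCohn_false, neg_neg])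
  rw [hSt, _root_.map_mul, stToCohn_wSt, stToCohn_wSt, hw, hw, inv_neg, inv_one]
  calc epsC 0 * hC u⁻¹ * (epsC 0 * hC (-1))
      = epsC 0 * hC u⁻¹ * (epsC 0)⁻¹ * (epsC 0 ^ 2 * hC (-1)) := by group
    _ = hC u := by
        rw [epsC_zero_conj_hC, inv_inv, ← hC_neg_one, hC_mul, hC_mul, neg_mul_neg, mul_one,
          mul_one]

theorem C2_le_ker_stToCohn : C2 A ≤ (stToCohn (A := A)).ker := by
  refine Subgroup.normalClosure_le_normal ?_
  rintro _ ⟨u, v, rfl⟩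
  refine MonoidHom.mem_ker.mpr ?_
  rw [symbolSt, _root_.map_mul, _root_.map_mul, map_inv, stToCohn_hSt,
    stToCohn_hSt, stToCohn_hSt, hC_mul, mul_inv_cancel]

theorem ESL_zero_pow_three_mul_ESL (t : A) : ESL 0 ^ 3 * ESL t = E21SL t := by
  ext i j
  rw [Matrix.SpecialLinearGroup.coe_mul, Matrix.SpecialLinearGroup.coe_pow]
  fin_cases i <;> fin_cases j <;> simp [ESL, E21SL, pow_succ, Matrix.mul_apply, Fin.sum_univ_two]

theorem ESL_neg_mul_ESL_zero_pow_three (t : A) : ESL (-t) * ESL 0 ^ 3 = E12SL t := by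
  ext i j
  rw [Matrix.SpecialLinearGroup.coe_mul, Matrix.SpecialLinearGroup.coe_pow]
  fin_cases i <;> fin_cases j <;> simp [ESL, E12SL, pow_succ, Matrix.mul_apply, Fin.sum_univ_two]

theorem psiC_comp_stToCohn : (psiC A).comp stToCohn = phiSt A := by
  refine PresentedGroup.ext fun ⟨b, t⟩ => ?_
  change psiC A (stToCohn (xSt b t)) = phiSt A (xSt b t)
  rw [stToCohn_xSt, phiSt_xSt]
  cases b
  · simp only [stGenToCohn, cond_false, yC, _root_.map_mul, map_pow, psiC_epsC, stGen,
      ESL_zero_pow_three_mul_ESL]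
  · simp only [stGenToCohn, cond_true, ybarC, _root_.map_mul, map_pow, psiC_epsC, stGen,
      ESL_neg_mul_ESL_zero_pow_three]

end CohnGroup

section SteinbergGroup

variable {A : Type*} [CommRing A]

theorem xSt_add (b : Bool) (s t : A) : xSt b s * xSt b t = xSt b (s + t) :=
  PresentedGroup.mk_eq_mk_of_mul_inv_mem (Or.inl ⟨b, s, t, rfl⟩)

theorem xSt_zero (b : Bool) : xSt b (0 : A) = 1 :=
  apply_zero_of_add (f := fun p : Bool × A => xSt p.1 p.2) xSt_add b

theorem wSt_neg (b : Bool) (u : Aˣ) : wSt b (-u) = (wSt b u)⁻¹ :=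
  wOf_neg (f := fun p : Bool × A => xSt p.1 p.2) xSt_add b u

theorem wSt_conj (b : Bool) (u : Aˣ) (t : A) :
    wSt b u * xSt b t * (wSt b u)⁻¹ = xSt (!b) (-(((u⁻¹ : Aˣ) : A) ^ 2 * t)) := by
  rw [← wSt_neg]
  exact PresentedGroup.mk_eq_mk_of_mul_inv_mem (Or.inr ⟨b, u, t, rfl⟩)

theorem wSt_conj_not (b : Bool) (u : Aˣ) (t : A) :
    wSt b u * xSt (!b) t * (wSt b u)⁻¹ = xSt b (-((u : A) ^ 2 * t)) :=
  wOf_conj_not (f := fun p : Bool × A => xSt p.1 p.2) xSt_add (wSt_conj b) u t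

theorem wSt_true (u : Aˣ) : wSt true u = wSt false (-u⁻¹) :=
  wOf_not (f := fun p : Bool × A => xSt p.1 p.2) xSt_add (wSt_conj false) u

def omegaSt : St2 A := wSt false (-1)

local notation "ω" => (omegaSt : St2 A)

theorem omega_conj_xSt (b : Bool) (t : A) : ω * xSt b t * ω⁻¹ = xSt (!b) (-t) := by
  cases b
  · simpa [omegaSt] using wSt_conj false (-1) t
  · simpa [omegaSt] using wSt_conj_not false (-1) t

theorem commute_omega_sq (g : St2 A) : Commute (ω ^ 2) g := by
  refine PresentedGroup.commute_of_forall_commute_of (fun ⟨b, t⟩ => ?_) g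
  refine mul_inv_eq_iff_eq_mul.mp ?_
  change ω ^ 2 * xSt b t * (ω ^ 2)⁻¹ = xSt b t
  calc ω ^ 2 * xSt b t * (ω ^ 2)⁻¹ = ω * (ω * xSt b t * ω⁻¹) * ω⁻¹ := by
        rw [sq]; group
    _ = xSt b t := by rw [omega_conj_xSt, omega_conj_xSt, Bool.not_not, neg_neg]

theorem omega_conj_wSt (b : Bool) (u : Aˣ) : ω * wSt b u * ω⁻¹ = wSt (!b) (-u) := by
  calc ω * wSt b u * ω⁻¹
      = (ω * xSt b (u : A) * ω⁻¹) * (ω * xSt (!b) (-((u⁻¹ : Aˣ) : A)) * ω⁻¹) *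
          (ω * xSt b (u : A) * ω⁻¹) := by
        simp only [wSt]; group
    _ = wSt (!b) (-u) := by
        simp only [omega_conj_xSt, wSt, Bool.not_not, neg_neg, Units.val_neg, inv_neg]

theorem wSt_true_one : wSt true (1 : Aˣ) = ω := by
  rw [wSt_true, inv_one, omegaSt]

theorem hSt_true_one : hSt true (1 : Aˣ) = 1 := by
  rw [hSt, wSt_neg, mul_inv_cancel]

theorem hSt_true_neg_one : hSt true (-1 : Aˣ) = (ω ^ 2)⁻¹ := by
  rw [hSt, wSt_neg, wSt_true_one, sq, _root_.mul_inv_rev]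

theorem omega_conj_hSt (u : Aˣ) : ω * hSt true u * ω⁻¹ = hSt true u⁻¹ := by
  calc ω * hSt true u * ω⁻¹ = (ω * wSt true u * ω⁻¹) * (ω * wSt true (-1) * ω⁻¹) := by
        simp only [hSt]; group
    _ = hSt true u⁻¹ := by
        rw [omega_conj_wSt, omega_conj_wSt, Bool.not_true, neg_neg, hSt, wSt_true, wSt_true,
          inv_inv, inv_neg, inv_one, neg_neg]

theorem hSt_conj_not (b : Bool) (u : Aˣ) (t : A) :
    hSt b u * xSt (!b) t * (hSt b u)⁻¹ = xSt (!b) (((u⁻¹ : Aˣ) : A) ^ 2 * t) := by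
  calc hSt b u * xSt (!b) t * (hSt b u)⁻¹
      = wSt b u * (wSt b (-1) * xSt (!b) t * (wSt b (-1))⁻¹) * (wSt b u)⁻¹ := by
        simp only [hSt]; group
    _ = xSt (!b) (((u⁻¹ : Aˣ) : A) ^ 2 * t) := by
        rw [wSt_conj_not, wSt_conj]
        simp

theorem omega_mul_xSt (b : Bool) (t : A) : ω * xSt b t = xSt (!b) (-t) * ω :=
  mul_inv_eq_iff_eq_mul.mp (omega_conj_xSt b t)

def epsSt (a : A) : St2 A := ω * xSt false a

theorem epsSt_eq (a : A) : epsSt a = xSt true (-a) * ω := omega_mul_xSt false a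

theorem epsSt_hFree (u : Aˣ) :
    epsSt (-(u : A)) * epsSt (-((u⁻¹ : Aˣ) : A)) * epsSt (-(u : A)) = hSt true u * ω ^ 4 := by
  calc epsSt (-(u : A)) * epsSt (-((u⁻¹ : Aˣ) : A)) * epsSt (-(u : A))
      = xSt true (u : A) * (ω * xSt true ((u⁻¹ : Aˣ) : A)) * ω * xSt true (u : A) * ω := by
        simp only [epsSt_eq, neg_neg]; group
    _ = xSt true (u : A) * xSt false (-((u⁻¹ : Aˣ) : A)) * (ω ^ 2 * xSt true (u : A)) * ω := by
        rw [omega_mul_xSt, Bool.not_true, sq]; group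
    _ = hSt true u * ω ^ 4 := by
        rw [(commute_omega_sq _).eq, hSt, wSt_neg, wSt_true_one, wSt]
        simp only [Bool.not_true, pow_succ, pow_zero, one_mul]; group

theorem epsSt_mul_epsSt_zero_mul_epsSt (a b : A) :
    epsSt a * epsSt 0 * epsSt b = ω ^ 2 * epsSt (a + b) := by
  calc epsSt a * epsSt 0 * epsSt b = ω * xSt false a * (ω ^ 2 * xSt false b) := by
        simp only [epsSt, xSt_zero, mul_one, sq]; group
    _ = ω ^ 2 * epsSt (a + b) := by
        rw [(commute_omega_sq _).eq, epsSt, ← xSt_add, (commute_omega_sq (ω * _)).eq]; group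

theorem hSt_mul_epsSt_mul_hSt (u : Aˣ) (a : A) :
    hSt true u * epsSt a * hSt true u = epsSt ((u : A) ^ 2 * a) * (hSt true u⁻¹ * hSt true u) := by
  have hω : ω * hSt true u⁻¹ = hSt true u * ω := by
    simpa only [inv_inv] using mul_inv_eq_iff_eq_mul.mp (omega_conj_hSt u⁻¹)
  have hx : hSt true u⁻¹ * xSt false a = xSt false ((u : A) ^ 2 * a) * hSt true u⁻¹ := by
    simpa only [inv_inv, Bool.not_true] using mul_inv_eq_iff_eq_mul.mp (hSt_conj_not true u⁻¹ a)
  calc hSt true u * epsSt a * hSt true u = ω * (hSt true u⁻¹ * xSt false a) * hSt true u := by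
        rw [epsSt, ← mul_assoc, ← hω]; group
    _ = epsSt ((u : A) ^ 2 * a) * (hSt true u⁻¹ * hSt true u) := by
        rw [hx, epsSt]; group

end SteinbergGroup

section Quotient

variable {A : Type*} [CommRing A]

theorem mk_symbolSt (u v : Aˣ) : (symbolSt u v : St2 A ⧸ C2 A) = 1 :=
  (QuotientGroup.eq_one_iff _).mpr (Subgroup.subset_normalClosure ⟨u, v, rfl⟩)

def hStBar : Aˣ →* St2 A ⧸ C2 A where
  toFun u := hSt true u
  map_one' := by rw [hSt_true_one, QuotientGroup.mk_one]
  map_mul' u v := by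
    have h := mk_symbolSt (A := A) u v
    rw [symbolSt, QuotientGroup.mk_mul, QuotientGroup.mk_mul, QuotientGroup.mk_inv,
      mul_inv_eq_one] at h
    exact h.symm

theorem hStBar_apply (u : Aˣ) : hStBar u = (hSt true u : St2 A ⧸ C2 A) := rfl

theorem mk_omegaSt_sq : ((omegaSt ^ 2 : St2 A) : St2 A ⧸ C2 A) = hStBar (-1) := by
  rw [← inv_inv (omegaSt ^ 2), ← hSt_true_neg_one, QuotientGroup.mk_inv, ← hStBar_apply,
    ← map_inv, inv_neg, inv_one]

theorem mk_omegaSt_pow_four : ((omegaSt ^ 4 : St2 A) : St2 A ⧸ C2 A) = 1 := by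
  rw [show 4 = 2 * 2 from rfl, pow_mul, QuotientGroup.mk_pow, mk_omegaSt_sq, ← map_pow,
    neg_one_sq, map_one]

theorem lift_mk_epsSt_hFree (u : Aˣ) :
    FreeGroup.lift (fun a : A => (epsSt a : St2 A ⧸ C2 A)) (hFree u) = hStBar u := by
  simp only [hFree, _root_.map_mul, FreeGroup.lift_apply_of, ← QuotientGroup.mk_mul,
    epsSt_hFree]
  rw [QuotientGroup.mk_mul, mk_omegaSt_pow_four, mul_one, hStBar_apply]

theorem lift_mk_epsSt_eq_one :
    ∀ r ∈ CRels A, FreeGroup.lift (fun a : A => (epsSt a : St2 A ⧸ C2 A)) r = 1 := by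
  rintro r ((⟨u, v, rfl⟩ | ⟨a, b, rfl⟩) | ⟨u, a, rfl⟩) <;>
    rw [_root_.map_mul, map_inv, mul_inv_eq_one]
  · rw [_root_.map_mul, lift_mk_epsSt_hFree, lift_mk_epsSt_hFree, lift_mk_epsSt_hFree,
      _root_.map_mul]
  · simp only [_root_.map_mul, FreeGroup.lift_apply_of, lift_mk_epsSt_hFree,
      ← QuotientGroup.mk_mul, epsSt_mul_epsSt_zero_mul_epsSt]
    rw [QuotientGroup.mk_mul, mk_omegaSt_sq]
  · simp only [_root_.map_mul, FreeGroup.lift_apply_of, lift_mk_epsSt_hFree, hStBar_apply,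
      ← QuotientGroup.mk_mul, hSt_mul_epsSt_mul_hSt]
    rw [QuotientGroup.mk_mul, QuotientGroup.mk_mul, ← hStBar_apply, ← hStBar_apply,
      ← _root_.map_mul, inv_mul_cancel, map_one, mul_one]

def cohnToQuot : CGroup A →* St2 A ⧸ C2 A := PresentedGroup.toGroup lift_mk_epsSt_eq_one

theorem cohnToQuot_epsC (a : A) : cohnToQuot (epsC a) = (epsSt a : St2 A ⧸ C2 A) :=
  PresentedGroup.toGroup.of _

def quotToCohn : St2 A ⧸ C2 A →* CGroup A :=
  QuotientGroup.lift _ stToCohn C2_le_ker_stToCohn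

theorem quotToCohn_comp_cohnToQuot : quotToCohn.comp cohnToQuot = MonoidHom.id (CGroup A) := by
  refine PresentedGroup.ext fun a => ?_
  change quotToCohn (cohnToQuot (epsC a)) = epsC a
  rw [cohnToQuot_epsC, quotToCohn, QuotientGroup.lift_mk, epsSt, omegaSt, _root_.map_mul,
    stToCohn_wSt, wOf_stGenToCohn_false, stToCohn_xSt, neg_neg, hC_one, mul_one]
  change epsC 0 * (epsC 0 ^ 3 * epsC a) = epsC a
  rw [← mul_assoc, ← pow_succ', epsC_zero_pow_four, one_mul]

theorem cohnToQuot_comp_quotToCohn : cohnToQuot.comp quotToCohn = MonoidHom.id (St2 A ⧸ C2 A) := by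
  refine QuotientGroup.monoidHom_ext _ (PresentedGroup.ext fun ⟨b, t⟩ => ?_)
  change cohnToQuot (quotToCohn (xSt b t : St2 A ⧸ C2 A)) = (xSt b t : St2 A ⧸ C2 A)
  have h0 : cohnToQuot (epsC 0) = ((omegaSt : St2 A) : St2 A ⧸ C2 A) := by
    rw [cohnToQuot_epsC, epsSt, xSt_zero, mul_one]
  rw [quotToCohn, QuotientGroup.lift_mk, stToCohn_xSt]
  cases b
  · change cohnToQuot (epsC 0 ^ 3 * epsC t) = _
    rw [_root_.map_mul, map_pow, h0, cohnToQuot_epsC, epsSt, ← QuotientGroup.mk_pow,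
      ← QuotientGroup.mk_mul, ← mul_assoc, ← pow_succ, QuotientGroup.mk_mul,
      mk_omegaSt_pow_four, one_mul]
  · change cohnToQuot (epsC (-t) * epsC 0 ^ 3) = _
    rw [_root_.map_mul, map_pow, h0, cohnToQuot_epsC, ← QuotientGroup.mk_pow,
      ← QuotientGroup.mk_mul, epsSt_eq, neg_neg, mul_assoc, ← pow_succ', QuotientGroup.mk_mul,
      mk_omegaSt_pow_four, mul_one]

def cohnEquivQuot : CGroup A ≃* St2 A ⧸ C2 A :=
  cohnToQuot.toMulEquiv quotToCohn quotToCohn_comp_cohnToQuot cohnToQuot_comp_quotToCohn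

end Quotient

theorem map_ker_psiC_cohnEquivQuot {A : Type*} [CommRing A] :
    Subgroup.map cohnEquivQuot.toMonoidHom (psiC A).ker =
      Subgroup.map (QuotientGroup.mk' (C2 A)) (phiSt A).ker := by
  have hφ : phiSt A = ((psiC A).comp quotToCohn).comp (QuotientGroup.mk' (C2 A)) := by
    rw [← psiC_comp_stToCohn]; rfl
  rw [hφ, ← MonoidHom.comap_ker, Subgroup.map_comap_eq_self_of_surjective
    (QuotientGroup.mk'_surjective _), Subgroup.map_equiv_eq_comap_symm', MonoidHom.comap_ker]
  rfl

/-- ε(a) ↦ [w₂₁(-1)x₂₁(a)] induces a well-defined group isomorphism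
γ : C(A) → St(2,A)/C(2,A), which restricts to an isomorphism from U(A) = ker ψ onto
K₂(2,A)/C(2,A); in particular U(A) ≅ K₂(2,A)/C(2,A). -/
theorem stmt18 (A : Type*) [CommRing A] :
    ∃ γ : CGroup A ≃* (St2 A ⧸ C2 A),
      (∀ a : A, γ (epsC a) = QuotientGroup.mk (wSt false (-1) * xSt false a)) ∧
      Subgroup.map γ.toMonoidHom (psiC A).ker =
        Subgroup.map (QuotientGroup.mk' (C2 A)) (phiSt A).ker ∧
      Nonempty
        ((psiC A).ker ≃* Subgroup.map (QuotientGroup.mk' (C2 A)) (phiSt A).ker) :=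
  ⟨cohnEquivQuot, cohnToQuot_epsC, map_ker_psiC_cohnEquivQuot,
    ⟨(cohnEquivQuot.subgroupMap (psiC A).ker).trans
      (MulEquiv.subgroupCongr map_ker_psiC_cohnEquivQuot)⟩⟩
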